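/- arXiv:1306.3919 — 2 statements merged into one kernel-verified Lean document; each statement's English description precedes it below -/
import Mathlib

section
/- If n \ge 7 is a prime number, then the quantity (4/3)\sigma(n) - (16/3)\sigma(n/2) - 2\sum_{a,b\in\mathbb{Z}, ab=2n} sgn^+(N) sgn^+(\tilde N)(|N+1/6| - |\tilde N+1/6|) equals (4/3)(n+4), where N=(-3a+b-1)/6, \tilde N=(3a+b-1)/6, and the sum runs over integer factorizations ab=2n for which N and \tilde N are both integers. -/
open scoped BigOperators

/-- The divisor sum `σ(x)`, extended by `0` at non-(positive integers). -/
def sigmaQ (x : ℚ) : ℚ :=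
  if 0 < x.num ∧ x.den = 1 then ((∑ d ∈ (x.num.toNat).divisors, d : ℕ) : ℚ) else 0

/-- `sgn⁺(k) = sgn(k)` for `k ≠ 0`, and `sgn⁺(0) = 1`. -/
def sgnPlus (k : ℤ) : ℤ := if k = 0 then 1 else Int.sign k

/-!
Since `n` is an odd prime, `σ(n) = n + 1` and `σ(n/2) = 0`, so the claim is that the sum is `-2`.
When `6 ∣ 3a + b - 1` we have `sgn⁺ N = sgn (b - 3a)` and `sgn⁺ Ñ = sgn (b + 3a)`, and the summand
becomes `(sgn (b + 3a) (b - 3a) - sgn (b - 3a) (b + 3a)) / 6`, which is even in `(a, b)`.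
For `ab = 2n` the number `3a + b` is prime to `6`, so exactly one of `(a, b)`, `(-a, -b)`
contributes; for `a, b > 0` the contribution is `-a` if `3a < b` and `b / 3` otherwise.
Over `(1, 2n), (2, n), (n, 2), (2n, 1)` this gives `-1 - 2 + 2/3 + 1/3 = -2`, using `n > 6`.
-/

open ArithmeticFunction
open scoped ArithmeticFunction.sigma

lemma sigmaQ_natCast (m : ℕ) : sigmaQ m = σ 1 m := by
  rcases m.eq_zero_or_pos with rfl | hm
  · simp [sigmaQ]
  · simp [sigmaQ, sigma_one_apply, hm]

lemma sigmaQ_div_two_of_odd {m : ℕ} (hm : Odd m) : sigmaQ ((m : ℚ) / 2) = 0 := by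
  refine if_neg fun ⟨_, hden⟩ => ?_
  have hnum : (((m : ℚ) / 2).num : ℚ) = m / 2 := (Rat.den_eq_one_iff _).mp hden
  have hq : (m : ℚ) = 2 * (((m : ℚ) / 2).num : ℚ) := by rw [hnum]; ring
  have : (m : ℤ) = 2 * ((m : ℚ) / 2).num := by exact_mod_cast hq
  obtain ⟨k, rfl⟩ := hm
  omega

lemma sgnPlus_of_nonneg {k : ℤ} (h : 0 ≤ k) : sgnPlus k = 1 := by
  rcases h.eq_or_lt with rfl | h
  · rfl
  · rw [sgnPlus, if_neg h.ne', Int.sign_eq_one_of_pos h]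

lemma sgnPlus_of_neg {k : ℤ} (h : k < 0) : sgnPlus k = -1 := by
  rw [sgnPlus, if_neg h.ne, Int.sign_eq_neg_one_of_neg h]

lemma sgnPlus_mul_abs_add {c : ℚ} (hc₀ : 0 ≤ c) (hc₁ : c < 1) (N : ℤ) :
    (sgnPlus N : ℚ) * |N + c| = N + c := by
  rcases le_or_gt 0 N with h | h
  · have : (0 : ℚ) ≤ N := by exact_mod_cast h
    rw [sgnPlus_of_nonneg h, abs_of_nonneg (by linarith)]
    simp
  · have : (N : ℚ) ≤ -1 := by exact_mod_cast (by omega : N ≤ -1)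
    rw [sgnPlus_of_neg h, abs_of_neg (by linarith)]
    simp

lemma sgnPlus_ediv_of_dvd_sub_one {m x : ℤ} (hm : 1 < m) (h : m ∣ x - 1) :
    sgnPlus ((x - 1) / m) = x.sign := by
  obtain ⟨k, hk⟩ := h
  rw [hk, Int.mul_ediv_cancel_left _ (by omega)]
  rcases le_or_gt 0 k with hk0 | hk0
  · rw [sgnPlus_of_nonneg hk0, Int.sign_eq_one_of_pos (by nlinarith)]
  · rw [sgnPlus_of_neg hk0, Int.sign_eq_neg_one_of_neg (by nlinarith)]

lemma cast_ediv_add_one_div_of_dvd_sub_one {m x : ℤ} (hm : m ≠ 0) (h : m ∣ x - 1) :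
    (((x - 1) / m : ℤ) : ℚ) + 1 / m = x / m := by
  obtain ⟨k, hk⟩ := h
  have hx : (x : ℚ) = m * k + 1 := by exact_mod_cast (by omega : x = m * k + 1)
  rw [hk, Int.mul_ediv_cancel_left _ hm, hx]
  field_simp

def pairTerm (a b : ℤ) : ℚ :=
  if (6 : ℤ) ∣ (-3 * a + b - 1) ∧ (6 : ℤ) ∣ (3 * a + b - 1) then
    ((sgnPlus ((-3 * a + b - 1) / 6) * sgnPlus ((3 * a + b - 1) / 6) : ℤ) : ℚ) *
      (|(((-3 * a + b - 1) / 6 : ℤ) : ℚ) + 1 / 6| - |(((3 * a + b - 1) / 6 : ℤ) : ℚ) + 1 / 6|)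
  else 0

lemma pairTerm_of_dvd {a b : ℤ} (h : 6 ∣ 3 * a + b - 1) :
    pairTerm a b = ((3 * a + b).sign * (-3 * a + b) - (-3 * a + b).sign * (3 * a + b)) / 6 := by
  have h' : 6 ∣ -3 * a + b - 1 := by omega
  have hN := cast_ediv_add_one_div_of_dvd_sub_one (by norm_num) h'
  have hM := cast_ediv_add_one_div_of_dvd_sub_one (by norm_num) h
  push_cast at hN hM
  rw [pairTerm, if_pos ⟨h', h⟩]
  set N := (-3 * a + b - 1) / 6
  set M := (3 * a + b - 1) / 6
  calc ((sgnPlus N * sgnPlus M : ℤ) : ℚ) * (|(N : ℚ) + 1 / 6| - |(M : ℚ) + 1 / 6|)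
      = sgnPlus M * (sgnPlus N * |(N : ℚ) + 1 / 6|)
          - sgnPlus N * (sgnPlus M * |(M : ℚ) + 1 / 6|) := by
        push_cast; ring
    _ = sgnPlus M * ((N : ℚ) + 1 / 6) - sgnPlus N * ((M : ℚ) + 1 / 6) := by
        rw [sgnPlus_mul_abs_add (by norm_num) (by norm_num),
          sgnPlus_mul_abs_add (by norm_num) (by norm_num)]
    _ = _ := by
        rw [hN, hM, sgnPlus_ediv_of_dvd_sub_one (by norm_num) h,
          sgnPlus_ediv_of_dvd_sub_one (by norm_num) h']
        ring

lemma pairTerm_of_not_dvd {a b : ℤ} (h : ¬ 6 ∣ 3 * a + b - 1) : pairTerm a b = 0 :=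
  if_neg fun hab => h hab.2

lemma pairTerm_add_pairTerm_neg {a b : ℤ} (ha : 0 < a) (hb : 0 < b) (hab : Odd (a + b))
    (hb3 : ¬ 3 ∣ b) :
    pairTerm a b + pairTerm (-a) (-b) = if 3 * a < b then -(a : ℚ) else b / 3 := by
  obtain ⟨k, hk⟩ := hab
  have hb' : b ≠ 3 * a := fun h => hb3 ⟨a, h⟩
  by_cases h : 6 ∣ 3 * a + b - 1
  · rw [pairTerm_of_dvd h, pairTerm_of_not_dvd (by omega),
      Int.sign_eq_one_of_pos (by omega : 0 < 3 * a + b)]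
    split_ifs with hlt
    · rw [Int.sign_eq_one_of_pos (by omega : 0 < -3 * a + b)]; push_cast; ring
    · rw [Int.sign_eq_neg_one_of_neg (by omega : -3 * a + b < 0)]; push_cast; ring
  · rw [pairTerm_of_not_dvd h, pairTerm_of_dvd (by omega),
      Int.sign_eq_neg_one_of_neg (by omega : 3 * -a + -b < 0)]
    split_ifs with hlt
    · rw [Int.sign_eq_neg_one_of_neg (by omega : -3 * -a + -b < 0)]; push_cast; ring
    · rw [Int.sign_eq_one_of_pos (by omega : 0 < -3 * -a + -b)]; push_cast; ring

lemma Int.sum_divisorsAntidiag_natCast {M : Type*} [AddCommMonoid M] (m : ℕ) (f : ℤ × ℤ → M) :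
    ∑ x ∈ Int.divisorsAntidiag m, f x =
      ∑ x ∈ m.divisorsAntidiagonal, (f (x.1, x.2) + f (-x.1, -x.2)) := by
  rw [Int.divisorsAntidiag_natCast, Finset.sum_disjUnion, Finset.sum_map, Finset.sum_map,
    ← Finset.sum_add_distrib]
  rfl

lemma finsum_ite_eq_sum_divisorsAntidiag_pairTerm {z : ℤ} (hz : z ≠ 0) :
    (∑ᶠ p : ℤ × ℤ,
      if p.1 * p.2 = z ∧ (6 : ℤ) ∣ (-3 * p.1 + p.2 - 1) ∧ (6 : ℤ) ∣ (3 * p.1 + p.2 - 1) then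
        ((sgnPlus ((-3 * p.1 + p.2 - 1) / 6) * sgnPlus ((3 * p.1 + p.2 - 1) / 6) : ℤ) : ℚ) *
          (|(((-3 * p.1 + p.2 - 1) / 6 : ℤ) : ℚ) + 1 / 6|
            - |(((3 * p.1 + p.2 - 1) / 6 : ℤ) : ℚ) + 1 / 6|)
      else 0) = ∑ p ∈ Int.divisorsAntidiag z, pairTerm p.1 p.2 := by
  rw [finsum_eq_sum_of_support_subset _ (s := Int.divisorsAntidiag z) fun p hp => ?_]
  · refine Finset.sum_congr rfl fun p hp => ?_
    rw [pairTerm, ite_and, if_pos (Int.mem_divisorsAntidiag.mp hp).1]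
  · rw [Finset.mem_coe, Int.mem_divisorsAntidiag]
    by_contra hne
    exact hp (if_neg fun h => hne ⟨h.1, hz⟩)

lemma Nat.divisorsAntidiagonal_prime_mul_prime {p q : ℕ} (hp : p.Prime) (hq : q.Prime)
    (hpq : p ≠ q) :
    (p * q).divisorsAntidiagonal = {(1, p * q), (p, q), (q, p), (p * q, 1)} := by
  ext ⟨d, e⟩
  simp only [Nat.mem_divisorsAntidiagonal, Finset.mem_insert, Finset.mem_singleton, Prod.mk.injEq]
  constructor
  · rintro ⟨hde, -⟩
    obtain ⟨d₁, d₂, h₁, h₂, rfl⟩ := dvd_mul.mp (Dvd.intro e hde)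
    obtain rfl := Nat.eq_div_of_mul_eq_right (by aesop) hde
    rcases (Nat.dvd_prime hp).mp h₁ with rfl | rfl <;>
      rcases (Nat.dvd_prime hq).mp h₂ with rfl | rfl <;>
      simp [hp.ne_zero, hq.ne_zero, hp.ne_one, hq.ne_one, hpq, hpq.symm,
        Nat.div_self (Nat.mul_pos hp.pos hq.pos)]
  · rintro (⟨rfl, rfl⟩ | ⟨rfl, rfl⟩ | ⟨rfl, rfl⟩ | ⟨rfl, rfl⟩) <;>
      simp [hp.ne_zero, hq.ne_zero, mul_comm]

lemma sum_pairTerm_divisorsAntidiag_two_mul_prime {n : ℕ} (hp : n.Prime) (h7 : 7 ≤ n) :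
    ∑ p ∈ Int.divisorsAntidiag (2 * n), pairTerm p.1 p.2 = -2 := by
  have hodd : n % 2 = 1 := Nat.odd_iff.mp (hp.odd_of_ne_two (by omega))
  have h3 : ¬ 3 ∣ n := fun h => by
    have := (Nat.prime_dvd_prime_iff_eq Nat.prime_three hp).mp h
    omega
  have hpair {a b : ℤ} (ha : 0 < a) (hb : 0 < b) (hab : (a + b) % 2 = 1) (hb3 : ¬ 3 ∣ b) :=
    pairTerm_add_pairTerm_neg ha hb (Int.odd_iff.mpr hab) hb3
  rw [show (2 * n : ℤ) = ((2 * n : ℕ) : ℤ) by norm_cast, Int.sum_divisorsAntidiag_natCast,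
    Nat.divisorsAntidiagonal_prime_mul_prime Nat.prime_two hp (by omega),
    Finset.sum_insert (by simp; omega), Finset.sum_insert (by simp; omega),
    Finset.sum_insert (by simp), Finset.sum_singleton]
  push_cast
  rw [hpair, hpair, hpair, hpair, if_pos, if_pos, if_neg, if_neg]
  · push_cast; ring
  all_goals omega

theorem rhs_at_primes (n : ℕ) (hp : n.Prime) (h7 : 7 ≤ n) :
    (4 / 3) * sigmaQ (n : ℚ) - (16 / 3) * sigmaQ ((n : ℚ) / 2)
      - 2 * (∑ᶠ p : ℤ × ℤ,
          if p.1 * p.2 = 2 * (n : ℤ) ∧ (6 : ℤ) ∣ (-3 * p.1 + p.2 - 1)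
              ∧ (6 : ℤ) ∣ (3 * p.1 + p.2 - 1) then
            ((sgnPlus ((-3 * p.1 + p.2 - 1) / 6) * sgnPlus ((3 * p.1 + p.2 - 1) / 6) : ℤ) : ℚ) *
              (|(((-3 * p.1 + p.2 - 1) / 6 : ℤ) : ℚ) + 1 / 6|
                - |(((3 * p.1 + p.2 - 1) / 6 : ℤ) : ℚ) + 1 / 6|)
          else 0)
    = (4 / 3) * ((n : ℚ) + 4) := by
  rw [sigmaQ_natCast, sigma_one_apply, hp.sum_divisors,
    sigmaQ_div_two_of_odd (hp.odd_of_ne_two (by omega)),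
    finsum_ite_eq_sum_divisorsAntidiag_pairTerm (by omega),
    sum_pairTerm_divisorsAntidiag_two_mul_prime hp h7]
  push_cast
  ring
end

section
/- For all real k with k \ge 2, real l > 0, positive rationals n and \tilde m with n < \tilde m, and m = n - \tilde m < 0: \int_0^\infty \Gamma(1-k, 4\pi|m| y) e^{-4\pi n y} y^{k+l-2} dy = ((4\pi|m|)^{1-k} \Gamma(l) / ((k+l-1)(4\pi \tilde m)^l)) \cdot {}_2F_1(1, l, k+l; n/\tilde m). -/
open Real
open scoped BigOperators

/-- The upper incomplete Gamma function `Γ(s, x) = ∫_x^∞ e^{-t} t^{s-1} dt`. -/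
noncomputable def incGamma (s x : ℝ) : ℝ := ∫ t in Set.Ioi x, Real.exp (-t) * t ^ (s - 1)

/-- Pochhammer symbol `(p)_j = p (p+1) ⋯ (p+j-1)`. -/
noncomputable def poch (p : ℝ) (j : ℕ) : ℝ := ∏ i ∈ Finset.range j, (p + (i : ℝ))

/-- Gauss hypergeometric series `₂F₁(a, b, c; z)`. -/
noncomputable def twoF1 (a b c z : ℝ) : ℝ :=
  ∑' j : ℕ, (poch a j * poch b j / (poch c j * (j.factorial : ℝ))) * z ^ j

/-!
Put `a = 4π(m̃ - n)` and `b = 4πn`, so that `a + b = 4πm̃`. Scaling the variable of the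
incomplete Gamma function gives `Γ(1 - k, ay) = (ay)^{1-k} ∫_1^∞ u^{-k} e^{-ayu} du`; after
exchanging the two integrals the `y`-integral is a Gamma integral, which leaves
`a^{1-k} Γ(l) ∫_1^∞ u^{-k} (au + b)^{-l} du`, and `u = 1/v` turns this into
`∫_0^1 v^{k+l-2} (a + bv)^{-l} dv`. Writing `a + bv = (a + b)(1 - z(1 - v))` with `z = n/m̃`,
expanding by the binomial series and integrating term by term against the Beta integrals
`∫_0^1 v^p (1 - v)^j dv = j! / (p + 1)_{j+1}` produces the series of `₂F₁(1, l; k + l; z)`.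
-/

open MeasureTheory Set

lemma poch_succ_right (p : ℝ) (j : ℕ) : poch p (j + 1) = poch p j * (p + j) :=
  Finset.prod_range_succ _ _

lemma poch_succ_left (p : ℝ) (j : ℕ) : poch p (j + 1) = p * poch (p + 1) j := by
  rw [poch, Finset.prod_range_succ', poch, mul_comm]
  push_cast
  simp only [add_zero, add_assoc, add_comm (1 : ℝ)]

lemma poch_one (j : ℕ) : poch 1 j = j.factorial := by
  induction j with
  | zero => simp [poch]
  | succ j ih => rw [poch_succ_right, ih, Nat.factorial_succ]; push_cast; ring

lemma poch_nonneg {p : ℝ} (hp : 0 ≤ p) (j : ℕ) : 0 ≤ poch p j :=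
  Finset.prod_nonneg fun i _ => by positivity

lemma poch_pos {p : ℝ} (hp : 0 < p) (j : ℕ) : 0 < poch p j :=
  Finset.prod_pos fun i _ => by positivity

lemma poch_eq_ascPochhammer_eval (p : ℝ) (j : ℕ) : poch p j = (ascPochhammer ℝ j).eval p := by
  induction j with
  | zero => simp [poch]
  | succ j ih => rw [poch_succ_right, ih, ascPochhammer_succ_eval]

lemma ring_choose_eq_poch_div_factorial (l : ℝ) (j : ℕ) :
    Ring.choose (l + j - 1) j = poch l j / j.factorial := by
  rw [Ring.choose_eq_smul, Polynomial.descPochhammer_smeval_eq_ascPochhammer,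
    Polynomial.ascPochhammer_smeval_eq_eval, poch_eq_ascPochhammer_eval, smul_eq_mul,
    div_eq_inv_mul]
  congr 2
  ring

lemma hasSum_poch_div_factorial_mul_pow (l : ℝ) {x : ℝ} (hx : |x| < 1) :
    HasSum (fun j : ℕ => poch l j / j.factorial * x ^ j) ((1 - x) ^ (-l)) := by
  have h := (Real.one_div_one_sub_rpow_hasFPowerSeriesOnBall_zero l).hasSum
    (y := x) (by simpa [enorm_eq_nnnorm, ← NNReal.coe_lt_coe] using hx)
  simp only [FormalMultilinearSeries.ofScalars_apply_eq, ring_choose_eq_poch_div_factorial,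
    smul_eq_mul, zero_add] at h
  rwa [Real.rpow_neg (by linarith [abs_lt.1 hx]), ← one_div]

lemma hasSum_integral_of_nonneg {α ι : Type*} [MeasurableSpace α] [Countable ι] {μ : Measure α}
    {f : ι → α → ℝ} {g : α → ℝ} (hf : ∀ j, AEStronglyMeasurable (f j) μ)
    (hf_nonneg : ∀ j, 0 ≤ᵐ[μ] f j) (hfg : ∀ᵐ x ∂μ, HasSum (fun j => f j x) (g x))
    (hg : Integrable g μ) :
    HasSum (fun j => ∫ x, f j x ∂μ) (∫ x, g x ∂μ) := by
  refine hasSum_integral_of_dominated_convergence f hf (fun j => ?_)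
    (hfg.mono fun x hx => hx.summable) (hg.congr (hfg.mono fun x hx => hx.tsum_eq.symm)) hfg
  filter_upwards [hf_nonneg j] with x hx using (Real.norm_of_nonneg hx).le

lemma incGamma_eq_rpow_mul_integral_Ioi_one (s : ℝ) {x : ℝ} (hx : 0 < x) :
    incGamma s x = x ^ s * ∫ u in Ioi 1, u ^ (s - 1) * Real.exp (-(x * u)) := by
  have h := integral_comp_mul_left_Ioi (fun t => Real.exp (-t) * t ^ (s - 1)) 1 hx
  have hscale : ∀ u ∈ Ioi (1 : ℝ), Real.exp (-(x * u)) * (x * u) ^ (s - 1)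
      = x ^ (s - 1) * (u ^ (s - 1) * Real.exp (-(x * u))) := fun u hu => by
    rw [Real.mul_rpow hx.le (zero_le_one.trans hu.le)]
    ring
  rw [mul_one, smul_eq_mul, ← incGamma, setIntegral_congr_fun measurableSet_Ioi hscale,
    integral_const_mul] at h
  rw [← mul_right_inj' (inv_ne_zero hx.ne'), ← h, Real.rpow_sub_one hx.ne']
  ring

lemma integrableOn_rpow_mul_exp_neg_mul {s c : ℝ} (hs : -1 < s) (hc : 0 < c) :
    IntegrableOn (fun y : ℝ => y ^ s * Real.exp (-(c * y))) (Ioi 0) := by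
  simpa [Real.rpow_one, neg_mul] using integrableOn_rpow_mul_exp_neg_mul_rpow hs one_pos hc

lemma integrableOn_Ioi_one_rpow_mul_add_rpow {k l a b : ℝ} (hk : 1 < k) (hl : 0 ≤ l)
    (ha : 0 < a) (hb : 0 ≤ b) :
    IntegrableOn (fun u : ℝ => u ^ (-k) * (a * u + b) ^ (-l)) (Ioi 1) := by
  refine (integrableOn_Ioi_rpow_of_lt (by linarith) one_pos).mul_bdd (c := a ^ (-l))
    (by fun_prop : Measurable fun u : ℝ => (a * u + b) ^ (-l)).aestronglyMeasurable
    ((ae_restrict_iff' measurableSet_Ioi).2 (.of_forall fun u hu => ?_))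
  have hau : a ≤ a * u + b := by nlinarith [mem_Ioi.1 hu]
  rw [Real.norm_of_nonneg (Real.rpow_nonneg (ha.le.trans hau) _)]
  exact Real.rpow_le_rpow_of_nonpos ha hau (neg_nonpos.2 hl)

lemma incGamma_mul_exp_mul_rpow_eq_integral {k l a b y : ℝ} (ha : 0 < a) (hy : 0 < y) :
    incGamma (1 - k) (a * y) * Real.exp (-(b * y)) * y ^ (k + l - 2)
      = a ^ (1 - k) * ∫ u in Ioi 1, u ^ (-k) * (y ^ (l - 1) * Real.exp (-((a * u + b) * y))) := by
  rw [incGamma_eq_rpow_mul_integral_Ioi_one _ (mul_pos ha hy), ← integral_const_mul,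
    ← integral_mul_const, ← integral_mul_const, ← integral_const_mul]
  refine setIntegral_congr_fun measurableSet_Ioi fun u _ => ?_
  rw [Real.mul_rpow ha.le hy.le, show 1 - k - 1 = -k by ring,
    show -((a * u + b) * y) = -(a * y * u) + -(b * y) by ring, Real.exp_add,
    show l - 1 = (1 - k) + (k + l - 2) by ring, Real.rpow_add hy]
  ring

lemma integral_incGamma_mul_exp_mul_rpow {k l a b : ℝ} (hk : 1 < k) (hl : 0 < l) (ha : 0 < a)
    (hb : 0 ≤ b) :
    ∫ y in Ioi 0, incGamma (1 - k) (a * y) * Real.exp (-(b * y)) * y ^ (k + l - 2)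
      = a ^ (1 - k) * Real.Gamma l * ∫ u in Ioi 1, u ^ (-k) * (a * u + b) ^ (-l) := by
  set F : ℝ → ℝ → ℝ := fun y u => u ^ (-k) * (y ^ (l - 1) * Real.exp (-((a * u + b) * y)))
  have hpos : ∀ u ∈ Ioi (1 : ℝ), 0 < a * u + b := fun u hu => by nlinarith [mem_Ioi.1 hu]
  have hinner : ∀ u ∈ Ioi (1 : ℝ),
      ∫ y in Ioi 0, F y u = Real.Gamma l * (u ^ (-k) * (a * u + b) ^ (-l)) := fun u hu => by
    have hu := hpos u hu
    rw [integral_const_mul, Real.integral_rpow_mul_exp_neg_mul_Ioi hl hu, one_div,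
      Real.inv_rpow hu.le, ← Real.rpow_neg hu.le]
    ring
  -- Tonelli: the `y`-integrals of the nonnegative kernel `F` are the values computed in `hinner`.
  have hint : Integrable (Function.uncurry F)
      ((volume.restrict (Ioi 0)).prod (volume.restrict (Ioi 1))) := by
    refine (integrable_prod_iff' (by fun_prop)).2 ⟨?_, ?_⟩
    · refine (ae_restrict_iff' measurableSet_Ioi).2 (.of_forall fun u hu => ?_)
      exact (integrableOn_rpow_mul_exp_neg_mul (s := l - 1) (by linarith)
        (hpos u hu)).const_mul (u ^ (-k))
    · refine ((integrableOn_Ioi_one_rpow_mul_add_rpow hk hl.le ha hb).const_mul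
        (Real.Gamma l)).congr ((ae_restrict_iff' measurableSet_Ioi).2 (.of_forall fun u hu => ?_))
      simp only [Function.uncurry_apply_pair]
      rw [← hinner u hu]
      refine setIntegral_congr_fun measurableSet_Ioi fun y hy => (Real.norm_of_nonneg ?_).symm
      have hu : (0 : ℝ) < u := zero_lt_one.trans hu
      have hy : (0 : ℝ) < y := hy
      positivity
  calc _ = a ^ (1 - k) * ∫ y in Ioi 0, ∫ u in Ioi 1, F y u := by
        rw [setIntegral_congr_fun measurableSet_Ioi fun y hy =>
          incGamma_mul_exp_mul_rpow_eq_integral ha hy, integral_const_mul]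
    _ = a ^ (1 - k) * ∫ u in Ioi 1, Real.Gamma l * (u ^ (-k) * (a * u + b) ^ (-l)) := by
        rw [integral_integral_swap hint, setIntegral_congr_fun measurableSet_Ioi hinner]
    _ = _ := by rw [integral_const_mul, mul_assoc]

lemma integral_Ioi_one_eq_integral_Ioo_inv (f : ℝ → ℝ) :
    ∫ u in Ioi 1, f u = ∫ v in Ioo (0 : ℝ) 1, (v ^ 2)⁻¹ * f v⁻¹ := by
  have himg : (fun v : ℝ => v⁻¹) '' Ioo 0 1 = Ioi 1 := by
    rw [Set.image_inv_eq_inv, inv_Ioo_0_left one_pos, inv_one]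
  rw [← himg, integral_image_eq_integral_abs_deriv_smul measurableSet_Ioo
    (fun v hv => (hasDerivAt_inv hv.1.ne').hasDerivWithinAt) inv_injective.injOn]
  refine setIntegral_congr_fun measurableSet_Ioo fun v _ => ?_
  rw [abs_neg, abs_of_nonneg (by positivity), smul_eq_mul]

lemma integral_Ioi_one_rpow_mul_add_rpow {k l a b : ℝ} (ha : 0 ≤ a) (hb : 0 ≤ b) :
    ∫ u in Ioi 1, u ^ (-k) * (a * u + b) ^ (-l)
      = ∫ v in Ioo (0 : ℝ) 1, v ^ (k + l - 2) * (a + b * v) ^ (-l) := by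
  rw [integral_Ioi_one_eq_integral_Ioo_inv]
  refine setIntegral_congr_fun measurableSet_Ioo fun v hv => ?_
  have hv : 0 < v := hv.1
  rw [show a * v⁻¹ + b = (a + b * v) / v by field_simp, Real.div_rpow (by positivity) hv.le,
    Real.inv_rpow hv.le, Real.rpow_neg hv.le k, inv_inv, Real.rpow_neg hv.le l, div_inv_eq_mul,
    show k + l - 2 = k + l + -2 by ring, Real.rpow_add hv, Real.rpow_add hv, Real.rpow_neg hv.le,
    Real.rpow_two]
  ring

lemma integrableOn_rpow_mul_one_sub_pow {p : ℝ} (hp : -1 < p) (j : ℕ) :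
    IntegrableOn (fun v : ℝ => v ^ p * (1 - v) ^ j) (Ioo (0 : ℝ) 1) := by
  refine ((intervalIntegral.integrableOn_Ioo_rpow_iff one_pos).2 hp).mul_bdd (c := 1)
    (by fun_prop : Measurable fun v : ℝ => (1 - v) ^ j).aestronglyMeasurable
    ((ae_restrict_iff' measurableSet_Ioo).2 (.of_forall fun v hv => ?_))
  rw [norm_pow, Real.norm_of_nonneg (by linarith [hv.2])]
  exact pow_le_one₀ (by linarith [hv.2]) (by linarith [hv.1])

lemma integral_rpow_mul_one_sub_pow {p : ℝ} (hp : -1 < p) (j : ℕ) :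
    ∫ v in Ioo (0 : ℝ) 1, v ^ p * (1 - v) ^ j = j.factorial / poch (p + 1) (j + 1) := by
  induction j generalizing p with
  | zero =>
    rw [← integral_Ioc_eq_integral_Ioo, ← intervalIntegral.integral_of_le zero_le_one]
    simp [integral_rpow (Or.inl hp), Real.zero_rpow (by linarith : p + 1 ≠ 0), poch]
  | succ j ih =>
    have hrec : ∫ v in Ioo (0 : ℝ) 1, v ^ p * (1 - v) ^ (j + 1)
        = (∫ v in Ioo (0 : ℝ) 1, v ^ p * (1 - v) ^ j)
          - ∫ v in Ioo (0 : ℝ) 1, v ^ (p + 1) * (1 - v) ^ j := by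
      rw [← integral_sub (integrableOn_rpow_mul_one_sub_pow hp j)
        (integrableOn_rpow_mul_one_sub_pow (by linarith) j)]
      refine setIntegral_congr_fun measurableSet_Ioo fun v hv => ?_
      rw [Real.rpow_add_one hv.1.ne', pow_succ]
      ring
    rw [hrec, ih hp, ih (by linarith), poch_succ_left (p + 1), poch_succ_left (p + 1),
      poch_succ_right, Nat.factorial_succ]
    have := poch_pos (by linarith : 0 < p + 1 + 1) j
    have : 0 < p + 1 := by linarith
    have : 0 < p + 1 + 1 + j := by positivity
    push_cast
    field_simp
    ring

lemma hasSum_add_mul_rpow_neg (l : ℝ) {a b v : ℝ} (ha : 0 < a) (hb : 0 ≤ b) (hv0 : 0 ≤ v)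
    (hv1 : v ≤ 1) :
    HasSum (fun j : ℕ => (a + b) ^ (-l) * (poch l j / j.factorial * (b / (a + b) * (1 - v)) ^ j))
      ((a + b * v) ^ (-l)) := by
  have hab : 0 < a + b := by linarith
  have hz : 0 ≤ b / (a + b) := by positivity
  have hx : |b / (a + b) * (1 - v)| < 1 := by
    rw [abs_of_nonneg (mul_nonneg hz (by linarith))]
    nlinarith [(div_lt_one hab).2 (by linarith : b < a + b)]
  have hsplit : 1 - b / (a + b) * (1 - v) = (a + b * v) / (a + b) := by
    field_simp
    ring
  have h := (hasSum_poch_div_factorial_mul_pow l hx).mul_left ((a + b) ^ (-l))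
  rwa [hsplit, Real.div_rpow (by positivity) hab.le,
    mul_div_cancel₀ _ (Real.rpow_pos_of_pos hab _).ne'] at h

lemma integrableOn_Ioo_rpow_mul_add_rpow {p l a b : ℝ} (hp : -1 < p) (hl : 0 ≤ l) (ha : 0 < a)
    (hb : 0 ≤ b) : IntegrableOn (fun v : ℝ => v ^ p * (a + b * v) ^ (-l)) (Ioo (0 : ℝ) 1) := by
  refine ((intervalIntegral.integrableOn_Ioo_rpow_iff one_pos).2 hp).mul_bdd (c := a ^ (-l))
    (by fun_prop : Measurable fun v : ℝ => (a + b * v) ^ (-l)).aestronglyMeasurable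
    ((ae_restrict_iff' measurableSet_Ioo).2 (.of_forall fun v hv => ?_))
  have hav : a ≤ a + b * v := by nlinarith [hv.1]
  rw [Real.norm_of_nonneg (Real.rpow_nonneg (ha.le.trans hav) _)]
  exact Real.rpow_le_rpow_of_nonpos ha hav (neg_nonpos.2 hl)

lemma integral_rpow_mul_add_rpow_eq_twoF1 {c l a b : ℝ} (hc : 1 < c) (hl : 0 ≤ l)
    (ha : 0 < a) (hb : 0 ≤ b) :
    ∫ v in Ioo (0 : ℝ) 1, v ^ (c - 2) * (a + b * v) ^ (-l)
      = (a + b) ^ (-l) / (c - 1) * twoF1 1 l c (b / (a + b)) := by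
  set coeff : ℕ → ℝ := fun j => (a + b) ^ (-l) * (poch l j / j.factorial * (b / (a + b)) ^ j)
  have hterm : ∀ j, ∀ v ∈ Ioo (0 : ℝ) 1, 0 ≤ coeff j * (v ^ (c - 2) * (1 - v) ^ j) :=
    fun j v hv => by
      have := poch_nonneg hl j
      have : 0 ≤ 1 - v := by linarith [hv.2]
      have : 0 < v := hv.1
      positivity
  have hpoint : ∀ v ∈ Ioo (0 : ℝ) 1, HasSum (fun j => coeff j * (v ^ (c - 2) * (1 - v) ^ j))
      (v ^ (c - 2) * (a + b * v) ^ (-l)) := fun v hv => by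
    refine (funext fun j => ?_ : (fun j => coeff j * (v ^ (c - 2) * (1 - v) ^ j)) = _) ▸
      (hasSum_add_mul_rpow_neg l ha hb hv.1.le hv.2.le).mul_left (v ^ (c - 2))
    rw [mul_pow]
    ring
  have hseries := hasSum_integral_of_nonneg
    (fun j => (by fun_prop : Measurable fun v : ℝ =>
      coeff j * (v ^ (c - 2) * (1 - v) ^ j)).aestronglyMeasurable)
    (fun j => (ae_restrict_iff' measurableSet_Ioo).2 (.of_forall (hterm j)))
    ((ae_restrict_iff' measurableSet_Ioo).2 (.of_forall hpoint))
    (integrableOn_Ioo_rpow_mul_add_rpow (by linarith) hl ha hb)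
  simp only [integral_const_mul, integral_rpow_mul_one_sub_pow (by linarith : -1 < c - 2),
    show c - 2 + 1 = c - 1 by ring, poch_succ_left, show c - 1 + 1 = c by ring] at hseries
  rw [← hseries.tsum_eq, twoF1, ← tsum_mul_left]
  refine tsum_congr fun j => ?_
  have := poch_pos (by linarith : 0 < c) j
  have : c - 1 ≠ 0 := by linarith
  simp only [coeff, poch_one]
  field_simp

theorem incGamma_integral_hypergeometric (k l : ℝ) (hk : 2 ≤ k) (hl : 0 < l)
    (n tm : ℚ) (hn : 0 < n) (hlt : n < tm) :
    ∫ y in Set.Ioi (0 : ℝ),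
        incGamma (1 - k) (4 * π * |(n : ℝ) - (tm : ℝ)| * y) *
          Real.exp (-(4 * π * (n : ℝ) * y)) * y ^ (k + l - 2)
      = ((4 * π * |(n : ℝ) - (tm : ℝ)|) ^ (1 - k) * Real.Gamma l /
          ((k + l - 1) * (4 * π * (tm : ℝ)) ^ l)) * twoF1 1 l (k + l) ((n : ℝ) / (tm : ℝ)) := by
  have hn : (0 : ℝ) < n := by exact_mod_cast hn
  have hlt : (n : ℝ) < tm := by exact_mod_cast hlt
  have ha : 0 < 4 * π * |(n : ℝ) - tm| := by
    have := abs_pos.2 (sub_ne_zero.2 hlt.ne)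
    positivity
  have hb : 0 ≤ 4 * π * (n : ℝ) := by positivity
  have hc : 0 < 4 * π * (tm : ℝ) := by
    have : (0 : ℝ) < tm := hn.trans hlt
    positivity
  have hab : 4 * π * |(n : ℝ) - tm| + 4 * π * n = 4 * π * tm := by
    rw [abs_of_neg (sub_neg.2 hlt)]
    ring
  rw [integral_incGamma_mul_exp_mul_rpow (by linarith) hl ha hb,
    integral_Ioi_one_rpow_mul_add_rpow ha.le hb,
    integral_rpow_mul_add_rpow_eq_twoF1 (by linarith) hl.le ha hb, hab,
    mul_div_mul_left _ _ (by positivity : 4 * π ≠ 0), Real.rpow_neg hc.le]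
  field_simp
end
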